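/- Scalar HMC characterization. Let H, F, N, r₀ be real numbers with H ≠ 0, F ≠ 0, F² ≤ 1 and r₀ > 0. Then there exists a real number P with P > 0, N = HFP, (1−F²)P ≥ 0, r₀ − H²P ≥ 0 and Ξ(P) ≥ 0 if and only if either (F > 0 and 0 < HN ≤ r₀F) or (F < 0 and r₀F ≤ HN < 0). -/

import Mathlib

/-- The concave quadratic `Ξ(P) = -H²P² + (r₀(1-F²) + 2HFN)P - N²`. -/
def Xi (H F N r0 P : ℝ) : ℝ :=
  -H ^ 2 * P ^ 2 + (r0 * (1 - F ^ 2) + 2 * H * F * N) * P - N ^ 2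

lemma Xi_eq_of_eq_mul {H F N r0 P : ℝ} (hN : N = H * F * P) :
    Xi H F N r0 P = (1 - F ^ 2) * P * (r0 - H ^ 2 * P) := by
  subst hN
  unfold Xi
  ring

/-- On the line `N = HFP` the quadratic `Ξ` factors (`Xi_eq_of_eq_mul`), so only `H²P ≤ r₀` is a
real constraint; in terms of `t = H²P` it says `HN = Ft` with `0 < t ≤ r₀`. -/
lemma exists_solution_iff_exists_mul_eq {H F N r0 : ℝ} (hH : H ≠ 0) (hF : F ^ 2 ≤ 1) :
    (∃ P : ℝ, 0 < P ∧ N = H * F * P ∧ 0 ≤ (1 - F ^ 2) * P ∧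
        0 ≤ r0 - H ^ 2 * P ∧ 0 ≤ Xi H F N r0 P) ↔
      ∃ t : ℝ, 0 < t ∧ t ≤ r0 ∧ H * N = F * t := by
  constructor
  · rintro ⟨P, hP, hN, -, hr, -⟩
    exact ⟨H ^ 2 * P, by positivity, by linarith, by rw [hN]; ring⟩
  · rintro ⟨t, ht, htr, hHN⟩
    have hH2 : 0 < H ^ 2 := by positivity
    have hN : N = H * F * (t / H ^ 2) := by
      field_simp
      linear_combination hHN
    have hFP : 0 ≤ (1 - F ^ 2) * (t / H ^ 2) := by
      have : 0 ≤ 1 - F ^ 2 := by linarith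
      positivity
    have hrP : 0 ≤ r0 - H ^ 2 * (t / H ^ 2) := by
      rw [mul_div_cancel₀ t hH2.ne']
      linarith
    refine ⟨t / H ^ 2, by positivity, hN, hFP, hrP, ?_⟩
    rw [Xi_eq_of_eq_mul hN]
    exact mul_nonneg hFP hrP

lemma exists_pos_le_mul_eq_iff {F a r : ℝ} (hF : F ≠ 0) :
    (∃ t : ℝ, 0 < t ∧ t ≤ r ∧ a = F * t) ↔
      (0 < F ∧ 0 < a ∧ a ≤ r * F) ∨ (F < 0 ∧ r * F ≤ a ∧ a < 0) := by
  constructor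
  · rintro ⟨t, ht, htr, rfl⟩
    rcases hF.lt_or_gt with hneg | hpos
    · exact Or.inr ⟨hneg, by nlinarith, mul_neg_of_neg_of_pos hneg ht⟩
    · exact Or.inl ⟨hpos, mul_pos hpos ht, by nlinarith⟩
  · rintro (⟨hpos, ha, har⟩ | ⟨hneg, har, ha⟩)
    · exact ⟨a / F, div_pos ha hpos, (div_le_iff₀ hpos).2 har, (mul_div_cancel₀ a hF).symm⟩
    · exact ⟨a / F, div_pos_of_neg_of_neg ha hneg, (div_le_iff_of_neg hneg).2 har,
        (mul_div_cancel₀ a hF).symm⟩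

theorem stmt_17 (H F N r0 : ℝ) (hH : H ≠ 0) (hF0 : F ≠ 0) (hF : F ^ 2 ≤ 1) :
    (∃ P : ℝ, 0 < P ∧ N = H * F * P ∧ 0 ≤ (1 - F ^ 2) * P ∧
        0 ≤ r0 - H ^ 2 * P ∧ 0 ≤ Xi H F N r0 P) ↔
      ((0 < F ∧ 0 < H * N ∧ H * N ≤ r0 * F) ∨
        (F < 0 ∧ r0 * F ≤ H * N ∧ H * N < 0)) := by
  rw [exists_solution_iff_exists_mul_eq hH hF]
  exact exists_pos_le_mul_eq_iff hF0
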